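/- Let K be a number field and 𝔞 a nonzero fractional ideal of 𝒪_K. (Surjectivity) For every s = (s₁, …, sₙ) ∈ ℝⁿ there exist μ ∈ 𝔞 ∖ {0} and t ∈ ℝⁿ such that ((1/μ)𝔞, t) is an f-representation and log wᵢ(μ) + tᵢ = sᵢ for all 1 ≤ i ≤ n. (Injectivity) If μ, μ' ∈ K^* and t, t' ∈ ℝⁿ are such that ((1/μ)𝔞, t) and ((1/μ')𝔞, t') are f-representations, and there exists a unit ε ∈ 𝒪_K^* with log wᵢ(μ) + tᵢ = log wᵢ(μ') + t'ᵢ + log wᵢ(ε) for all 1 ≤ i ≤ n, then (1/μ)𝔞 ∼ (1/μ')𝔞 and t = t'. In other words, the map sending the class of an f-representation ((1/μ)𝔞, t) to (log w₁(μ) + t₁, …, log wₙ(μ) + tₙ) modulo the unit lattice Λ := {(log w₁(ε), …, log wₙ(ε)) : ε ∈ 𝒪_K^*} is a bijection onto ℝⁿ/Λ. -/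

import Mathlib

/-!
Surjectivity: Minkowski's theorem gives a nonzero `μ ∈ 𝔞` with `wᵢ(μ) < exp sᵢ` for `i ≥ 1`,
leaving `w₀(μ)` free. Among the finitely many nonzero elements of `𝔞` in the box
`w₀ ≤ w₀(μ), wᵢ ≤ exp sᵢ` take a `≼`-smallest one `ν`. Multiplication by `ν` maps
`B(ν⁻¹𝔞, (t, 0))`, `tᵢ = sᵢ - log wᵢ(ν)`, into that box, and `≼` is compatible with
multiplication, so `1` is `≼`-minimal in it.

Injectivity: `h = μ'ε/μ` lies in `μ⁻¹𝔞`, `h⁻¹` lies in `μ'⁻¹𝔞`, and `wᵢ(h) = exp(tᵢ - t'ᵢ)`.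
Since `t, t' ≥ 0`, `h` (resp. `h⁻¹`) lies in the box of `(μ⁻¹𝔞, t)` (resp. `(μ'⁻¹𝔞, t')`) as
soon as its `w₀`-value is at most `1`, and then minimality of `1` forces that value to be `1`.
So both lie in their boxes, `1 ≼ h` and `1 ≼ h⁻¹`, i.e. `h ≼ 1 ≼ h`. Hence `h` has absolute value `1` at every infinite place, which gives both
`t = t'` and `μ⁻¹𝔞 ∼ μ'⁻¹𝔞`.
-/

open NumberField
open scoped nonZeroDivisors

/-- Lexicographic comparison of real tuples: `a ≤ₗₑₓ b`. -/
def lexLe {m : ℕ} (a b : Fin m → ℝ) : Prop :=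
  a = b ∨ ∃ i : Fin m, a i < b i ∧ ∀ j : Fin m, j < i → a j = b j

/-- The vector of absolute values of `h` at the infinite places, the distinguished place `w₀`
first. -/
def absVec {K : Type*} [Field K] [NumberField K] {n : ℕ}
    (w₀ : InfinitePlace K) (w : Fin n → InfinitePlace K) (h : K) : Fin (n + 1) → ℝ :=
  Fin.cons (w₀ h) (fun i => w i h)

/-- The total preorder `≼` on `K^*`: `h ≼ h'` iff the vector of absolute values of `h` is
lexicographically at most that of `h'` (distinguished place first). -/
def preceq {K : Type*} [Field K] [NumberField K] {n : ℕ}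
    (w₀ : InfinitePlace K) (w : Fin n → InfinitePlace K) (h h' : K) : Prop :=
  lexLe (absVec w₀ w h) (absVec w₀ w h')

/-- The box `B(𝔟, (t, ℓ)) = {h ∈ 𝔟 : w₀(h) ≤ exp ℓ and wᵢ(h) ≤ exp tᵢ for 1 ≤ i ≤ n}`. -/
def box {K : Type*} [Field K] [NumberField K] {n : ℕ}
    (w₀ : InfinitePlace K) (w : Fin n → InfinitePlace K)
    (𝔟 : FractionalIdeal (𝓞 K)⁰ K) (t : Fin n → ℝ) (ℓ : ℝ) : Set K :=
  {h : K | h ∈ 𝔟 ∧ w₀ h ≤ Real.exp ℓ ∧ ∀ i : Fin n, w i h ≤ Real.exp (t i)}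

/-- A pair `(𝔟, t)` is an *f-representation* if `1 ∈ B(𝔟, (t, 0))` and `1` is a smallest
element of `B(𝔟, (t, 0)) ∖ {0}` with respect to `≼`. -/
def IsFRep {K : Type*} [Field K] [NumberField K] {n : ℕ}
    (w₀ : InfinitePlace K) (w : Fin n → InfinitePlace K)
    (𝔟 : FractionalIdeal (𝓞 K)⁰ K) (t : Fin n → ℝ) : Prop :=
  (1 : K) ∈ box w₀ w 𝔟 t 0 ∧
  ∀ h ∈ box w₀ w 𝔟 t 0, h ≠ 0 → preceq w₀ w 1 h

/-- Two nonzero fractional ideals are *equivalent* if they differ by a principal ideal whose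
generator has absolute value `1` at every infinite place. -/
def EquivIdeal {K : Type*} [Field K] [NumberField K]
    (𝔟 𝔟' : FractionalIdeal (𝓞 K)⁰ K) : Prop :=
  ∃ h : K, h ≠ 0 ∧ 𝔟 = FractionalIdeal.spanSingleton (𝓞 K)⁰ h * 𝔟' ∧
    ∀ v : InfinitePlace K, v h = 1

lemma lexLe_iff_toLex_le {m : ℕ} {a b : Fin m → ℝ} : lexLe a b ↔ toLex a ≤ toLex b := by
  rw [le_iff_eq_or_lt, toLex_inj]
  exact or_congr Iff.rfl ⟨fun ⟨i, hi, hj⟩ => ⟨i, hj, hi⟩, fun ⟨i, hj, hi⟩ => ⟨i, hi, hj⟩⟩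

lemma lexLe_mul_left_iff {m : ℕ} {c a b : Fin m → ℝ} (hc : ∀ i, 0 < c i) :
    lexLe (c * a) (c * b) ↔ lexLe a b := by
  simp only [lexLe, funext_iff, Pi.mul_apply, mul_right_inj' (hc _).ne',
    mul_lt_mul_iff_right₀ (hc _)]

lemma lexLe.apply_zero_le {m : ℕ} {a b : Fin (m + 1) → ℝ} (h : lexLe a b) : a 0 ≤ b 0 := by
  rcases h with rfl | ⟨i, hi, hj⟩
  · exact le_rfl
  · rcases eq_or_ne i 0 with rfl | hi0
    · exact hi.le
    · exact (hj 0 (Fin.pos_of_ne_zero hi0)).le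

lemma Fin.forall_of_surjective_cons {α : Type*} {n : ℕ} {a : α} {f : Fin n → α}
    (hf : Function.Surjective (Fin.cons a f : Fin (n + 1) → α)) {P : α → Prop}
    (h₀ : P a) (h : ∀ i, P (f i)) (x : α) : P x := by
  obtain ⟨j, rfl⟩ := hf x
  induction j using Fin.cases <;> simp [*]

namespace FractionalIdeal

variable {R K : Type*} [CommRing R] [Field K] [Algebra R K] {S : Submonoid R}
  [IsLocalization S K]

lemma mem_spanSingleton_mul_iff {x y : K} (hy : y ≠ 0) {I : FractionalIdeal S K} :
    x ∈ spanSingleton S y * I ↔ y⁻¹ * x ∈ I := by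
  rw [mem_singleton_mul]
  constructor
  · rintro ⟨z, hz, rfl⟩
    rwa [inv_mul_cancel_left₀ hy]
  · exact fun h => ⟨y⁻¹ * x, h, (mul_inv_cancel_left₀ hy x).symm⟩

lemma spanSingleton_algebraMap_unit (u : Rˣ) : spanSingleton S (algebraMap R K u) = 1 := by
  rw [← coeIdeal_span_singleton, Ideal.span_singleton_eq_top.mpr u.isUnit, coeIdeal_top]

end FractionalIdeal

open NumberField.InfinitePlace NumberField.mixedEmbedding
open scoped NNReal

section NumberField

variable {K : Type*} [Field K] [NumberField K]

lemma FractionalIdeal.finite_setOf_mem_forall_infinitePlace_le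
    (𝔞 : FractionalIdeal (𝓞 K)⁰ K) (B : ℝ) :
    {x : K | x ∈ 𝔞 ∧ ∀ v : InfinitePlace K, v x ≤ B}.Finite := by
  obtain ⟨d, hd, hint⟩ := 𝔞.isFractional
  set δ : K := algebraMap (𝓞 K) K d
  have hδ : δ ≠ 0 := RingOfIntegers.coe_ne_zero_iff.mpr (nonZeroDivisors.ne_zero hd)
  refine ((Embeddings.finite_of_norm_le K ℂ ((∑ v : InfinitePlace K, v δ) * B)).preimage
    (mul_right_injective₀ hδ).injOn).subset ?_
  rintro x ⟨hx, hxB⟩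
  obtain ⟨r, hr⟩ := hint x hx
  refine ⟨?_, fun φ => ?_⟩
  · change IsIntegral ℤ (algebraMap (𝓞 K) K d * x)
    rw [← Algebra.smul_def, ← hr]
    exact RingOfIntegers.isIntegral_coe r
  · have hδφ : ‖φ δ‖ ≤ ∑ v : InfinitePlace K, v δ :=
      Finset.single_le_sum (f := fun v : InfinitePlace K => v δ) (fun v _ => apply_nonneg v δ)
        (Finset.mem_univ (mk φ))
    rw [map_mul, norm_mul]
    exact mul_le_mul hδφ (hxB (mk φ)) (norm_nonneg _) ((norm_nonneg _).trans hδφ)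

lemma FractionalIdeal.exists_ne_zero_mem_forall_ne_lt {𝔞 : FractionalIdeal (𝓞 K)⁰ K}
    (h𝔞 : 𝔞 ≠ 0) (w₀ : InfinitePlace K) {f : InfinitePlace K → ℝ≥0}
    (hf : ∀ w ≠ w₀, f w ≠ 0) : ∃ μ ∈ 𝔞, μ ≠ 0 ∧ ∀ w ≠ w₀, w μ < f w := by
  classical
  set B := (minkowskiBound K (Units.mk0 𝔞 h𝔞)).toNNReal
  have hfactor : convexBodyLTFactor K ≠ 0 := convexBodyLTFactor_ne_zero K
  obtain ⟨g, hgf, hg⟩ := adjust_f K (B / convexBodyLTFactor K + 1) hf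
  have hvol : minkowskiBound K (Units.mk0 𝔞 h𝔞) < MeasureTheory.volume (convexBodyLT K g) := by
    rw [convexBodyLT_volume, hg, ← ENNReal.coe_toNNReal (minkowskiBound_lt_top K _).ne,
      ← ENNReal.coe_mul, ENNReal.coe_lt_coe, mul_add, mul_div_cancel₀ _ hfactor, mul_one]
    exact lt_add_of_pos_right B (pos_iff_ne_zero.mpr hfactor)
  obtain ⟨μ, hμ, hμ0, hμg⟩ := exists_ne_zero_mem_ideal_lt K _ hvol
  exact ⟨μ, hμ, hμ0, fun w hw => hgf w hw ▸ hμg w⟩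

lemma FractionalIdeal.exists_ne_zero_mem_forall_lt {n : ℕ} {w₀ : InfinitePlace K}
    {w : Fin n → InfinitePlace K}
    (hw : Function.Injective (Fin.cons w₀ w : Fin (n + 1) → InfinitePlace K))
    {𝔞 : FractionalIdeal (𝓞 K)⁰ K} (h𝔞 : 𝔞 ≠ 0) {b : Fin n → ℝ} (hb : ∀ i, 0 < b i) :
    ∃ μ ∈ 𝔞, μ ≠ 0 ∧ ∀ i, w i μ < b i := by
  classical
  obtain ⟨hw₀, hw⟩ := Fin.cons_injective_iff.mp hw
  obtain ⟨μ, hμ, hμ0, hμb⟩ := exists_ne_zero_mem_forall_ne_lt h𝔞 w₀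
    (f := Function.extend w (fun i => (b i).toNNReal) 1) fun v _ => by
      by_cases hv : ∃ i, w i = v
      · obtain ⟨i, rfl⟩ := hv
        rw [hw.extend_apply]
        exact (Real.toNNReal_pos.mpr (hb i)).ne'
      · rw [Function.extend_apply' _ _ _ hv]
        exact one_ne_zero
  refine ⟨μ, hμ, hμ0, fun i => ?_⟩
  have := hμb (w i) fun h => hw₀ ⟨i, h⟩
  rwa [hw.extend_apply, Real.coe_toNNReal _ (hb i).le] at this

section FRepresentation

variable {n : ℕ} {w₀ : InfinitePlace K} {w : Fin n → InfinitePlace K}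

lemma absVec_one : absVec w₀ w (1 : K) = 1 := by
  funext j
  induction j using Fin.cases <;> simp [absVec]

lemma absVec_mul (x y : K) : absVec w₀ w (x * y) = absVec w₀ w x * absVec w₀ w y := by
  funext j
  induction j using Fin.cases <;> simp [absVec]

lemma absVec_pos {x : K} (hx : x ≠ 0) (j : Fin (n + 1)) : 0 < absVec w₀ w x j := by
  induction j using Fin.cases <;> simp [absVec, pos_iff, hx]

lemma preceq_iff_toLex_le {x y : K} :
    preceq w₀ w x y ↔ toLex (absVec w₀ w x) ≤ toLex (absVec w₀ w y) :=
  lexLe_iff_toLex_le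

lemma preceq_mul_left_iff {z x y : K} (hz : z ≠ 0) :
    preceq w₀ w (z * x) (z * y) ↔ preceq w₀ w x y := by
  rw [preceq, absVec_mul, absVec_mul, lexLe_mul_left_iff (absVec_pos hz)]
  rfl

lemma preceq.w₀_le {x y : K} (h : preceq w₀ w x y) : w₀ x ≤ w₀ y :=
  lexLe.apply_zero_le h

lemma absVec_eq_one_of_one_preceq {h : K} (hh : h ≠ 0)
    (h₁ : w₀ h ≤ 1 → preceq w₀ w 1 h) (h₂ : w₀ h⁻¹ ≤ 1 → preceq w₀ w 1 h⁻¹) :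
    absVec w₀ w h = 1 := by
  have hw₀ : w₀ h = 1 := by
    rcases le_total (w₀ h) 1 with hle | hge
    · exact le_antisymm hle (by simpa using (h₁ hle).w₀_le)
    · have hinv : w₀ h⁻¹ ≤ 1 := by rw [map_inv₀]; exact inv_le_one_of_one_le₀ hge
      have := (h₂ hinv).w₀_le
      rw [map_one, map_inv₀] at this
      exact le_antisymm ((one_le_inv₀ (pos_iff.mpr hh)).mp this) hge
  have hle : preceq w₀ w h 1 := by
    have := (preceq_mul_left_iff hh).mpr (h₂ (by simp [hw₀]))
    rwa [mul_one, mul_inv_cancel₀ hh] at this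
  rw [← absVec_one (w₀ := w₀) (w := w)]
  exact toLex_inj.mp (le_antisymm (preceq_iff_toLex_le.mp hle)
    (preceq_iff_toLex_le.mp (h₁ hw₀.le)))

lemma isFRep_of_forall_preceq {𝔞 : FractionalIdeal (𝓞 K)⁰ K} {ν : K} {c : ℝ} {s : Fin n → ℝ}
    (hν : ν ∈ 𝔞) (hν0 : ν ≠ 0) (hνc : w₀ ν ≤ c) (hνs : ∀ i, w i ν ≤ Real.exp (s i))
    (hmin : ∀ x ∈ 𝔞, x ≠ 0 → w₀ x ≤ c → (∀ i, w i x ≤ Real.exp (s i)) → preceq w₀ w ν x) :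
    IsFRep w₀ w (FractionalIdeal.spanSingleton (𝓞 K)⁰ ν⁻¹ * 𝔞)
      (fun i => s i - Real.log (w i ν)) := by
  have hνpos (v : InfinitePlace K) : 0 < v ν := pos_iff.mpr hν0
  have hexp (i : Fin n) : Real.exp (s i - Real.log (w i ν)) = Real.exp (s i) / w i ν := by
    rw [Real.exp_sub, Real.exp_log (hνpos _)]
  have hmem {x : K} : x ∈ FractionalIdeal.spanSingleton (𝓞 K)⁰ ν⁻¹ * 𝔞 ↔ ν * x ∈ 𝔞 := by
    rw [FractionalIdeal.mem_spanSingleton_mul_iff (inv_ne_zero hν0), inv_inv]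
  refine ⟨⟨hmem.mpr (by rwa [mul_one]), by simp, fun i => ?_⟩, fun x ⟨hx, hx₀, hxs⟩ hx0 => ?_⟩
  · rw [map_one, hexp, one_le_div (hνpos _)]
    exact hνs i
  · rw [← preceq_mul_left_iff hν0, mul_one]
    refine hmin _ (hmem.mp hx) (mul_ne_zero hν0 hx0) ?_ fun i => ?_
    · rw [Real.exp_zero] at hx₀
      rw [map_mul]
      exact (mul_le_of_le_one_right (hνpos _).le hx₀).trans hνc
    · rw [map_mul, ← le_div_iff₀' (hνpos _), ← hexp]
      exact hxs i

lemma exists_isFRep (hw : Function.Bijective (Fin.cons w₀ w : Fin (n + 1) → InfinitePlace K))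
    {𝔞 : FractionalIdeal (𝓞 K)⁰ K} (h𝔞 : 𝔞 ≠ 0) (s : Fin n → ℝ) :
    ∃ (μ : K) (t : Fin n → ℝ), μ ∈ 𝔞 ∧ μ ≠ 0 ∧
      IsFRep w₀ w (FractionalIdeal.spanSingleton (𝓞 K)⁰ μ⁻¹ * 𝔞) t ∧
      ∀ i : Fin n, Real.log (w i μ) + t i = s i := by
  obtain ⟨μ, hμ, hμ0, hμs⟩ :=
    FractionalIdeal.exists_ne_zero_mem_forall_lt hw.1 h𝔞 fun i => Real.exp_pos (s i)
  set S := {x : K | x ∈ 𝔞 ∧ x ≠ 0 ∧ w₀ x ≤ w₀ μ ∧ ∀ i, w i x ≤ Real.exp (s i)}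
  have hS : S.Finite := by
    refine (𝔞.finite_setOf_mem_forall_infinitePlace_le
      (max (w₀ μ) (∑ i, Real.exp (s i)))).subset ?_
    rintro x ⟨hx, -, hxμ, hxs⟩
    refine ⟨hx, Fin.forall_of_surjective_cons hw.2 (le_max_of_le_left hxμ)
      fun i => le_max_of_le_right ((hxs i).trans ?_)⟩
    exact Finset.single_le_sum (fun i _ => (Real.exp_pos (s i)).le) (Finset.mem_univ i)
  obtain ⟨ν, ⟨hν, hν0, hνμ, hνs⟩, hmin⟩ := S.exists_min_image
    (fun x => toLex (absVec w₀ w x)) hS ⟨μ, hμ, hμ0, le_rfl, fun i => (hμs i).le⟩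
  refine ⟨ν, _, hν, hν0, isFRep_of_forall_preceq hν hν0 hνμ hνs ?_, fun i => by ring⟩
  exact fun x hx hx0 hxμ hxs => preceq_iff_toLex_le.mpr (hmin x ⟨hx, hx0, hxμ, hxs⟩)

lemma IsFRep.nonneg {𝔟 : FractionalIdeal (𝓞 K)⁰ K} {t : Fin n → ℝ} (hF : IsFRep w₀ w 𝔟 t)
    (i : Fin n) : 0 ≤ t i := by
  have := hF.1.2.2 i
  rwa [map_one, Real.one_le_exp_iff] at this

lemma IsFRep.ne_zero_of_spanSingleton_inv_mul {𝔞 : FractionalIdeal (𝓞 K)⁰ K} {μ : K}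
    {t : Fin n → ℝ} (hF : IsFRep w₀ w (FractionalIdeal.spanSingleton (𝓞 K)⁰ μ⁻¹ * 𝔞) t) :
    μ ≠ 0 := by
  rintro rfl
  simpa using hF.1.1

lemma IsFRep.one_preceq {𝔟 : FractionalIdeal (𝓞 K)⁰ K} {t t' : Fin n → ℝ}
    (hF : IsFRep w₀ w 𝔟 t) (ht' : ∀ i, 0 ≤ t' i) {h : K} (hh : h ∈ 𝔟) (hh0 : h ≠ 0)
    (hwh : ∀ i, w i h = Real.exp (t i - t' i)) (hw₀h : w₀ h ≤ 1) : preceq w₀ w 1 h :=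
  hF.2 h ⟨hh, by rwa [Real.exp_zero], fun i => by
    rw [hwh i, Real.exp_le_exp]; linarith [ht' i]⟩ hh0

lemma isFRep_unique (hw : Function.Surjective (Fin.cons w₀ w : Fin (n + 1) → InfinitePlace K))
    {𝔞 : FractionalIdeal (𝓞 K)⁰ K} {μ μ' : K} {t t' : Fin n → ℝ}
    (hF : IsFRep w₀ w (FractionalIdeal.spanSingleton (𝓞 K)⁰ μ⁻¹ * 𝔞) t)
    (hF' : IsFRep w₀ w (FractionalIdeal.spanSingleton (𝓞 K)⁰ μ'⁻¹ * 𝔞) t')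
    (ε : (𝓞 K)ˣ) (hε : ∀ i : Fin n, Real.log (w i μ) + t i =
      Real.log (w i μ') + t' i + Real.log (w i (algebraMap (𝓞 K) K ε))) :
    EquivIdeal (FractionalIdeal.spanSingleton (𝓞 K)⁰ μ⁻¹ * 𝔞)
      (FractionalIdeal.spanSingleton (𝓞 K)⁰ μ'⁻¹ * 𝔞) ∧ t = t' := by
  set ε' : K := algebraMap (𝓞 K) K ε
  have hε' : ε' ≠ 0 := RingOfIntegers.coe_ne_zero_iff.mpr ε.ne_zero
  have hμ := hF.ne_zero_of_spanSingleton_inv_mul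
  have hμ' := hF'.ne_zero_of_spanSingleton_inv_mul
  set h := μ⁻¹ * (μ' * ε')
  have hh : h ≠ 0 := by positivity
  have hspan : FractionalIdeal.spanSingleton (𝓞 K)⁰ h * FractionalIdeal.spanSingleton _ μ'⁻¹ =
      FractionalIdeal.spanSingleton _ μ⁻¹ := by
    rw [FractionalIdeal.spanSingleton_mul_spanSingleton,
      show μ⁻¹ * (μ' * ε') * μ'⁻¹ = ε' * μ⁻¹ by field_simp,
      ← FractionalIdeal.spanSingleton_mul_spanSingleton,
      FractionalIdeal.spanSingleton_algebraMap_unit, one_mul]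
  have hideal : FractionalIdeal.spanSingleton (𝓞 K)⁰ μ⁻¹ * 𝔞 =
      FractionalIdeal.spanSingleton _ h * (FractionalIdeal.spanSingleton _ μ'⁻¹ * 𝔞) := by
    rw [← mul_assoc, hspan]
  have hmem : h ∈ FractionalIdeal.spanSingleton (𝓞 K)⁰ μ⁻¹ * 𝔞 := by
    rw [hideal, FractionalIdeal.mem_spanSingleton_mul_iff hh, inv_mul_cancel₀ hh]
    exact hF'.1.1
  have hmem' : h⁻¹ ∈ FractionalIdeal.spanSingleton (𝓞 K)⁰ μ'⁻¹ * 𝔞 := by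
    have := hF.1.1
    rwa [hideal, FractionalIdeal.mem_spanSingleton_mul_iff hh, mul_one] at this
  have hwh (i : Fin n) : w i h = Real.exp (t i - t' i) := by
    rw [show t i - t' i = Real.log (w i μ') + Real.log (w i ε') - Real.log (w i μ) by
        linarith [hε i], Real.exp_sub, Real.exp_add, Real.exp_log (pos_iff.mpr hμ'),
      Real.exp_log (pos_iff.mpr hε'), Real.exp_log (pos_iff.mpr hμ), map_mul, map_mul, map_inv₀]
    ring
  have hwh' (i : Fin n) : w i h⁻¹ = Real.exp (t' i - t i) := by
    rw [map_inv₀, hwh i, ← Real.exp_neg, neg_sub]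
  have habs := absVec_eq_one_of_one_preceq hh (hF.one_preceq hF'.nonneg hmem hh hwh)
    (hF'.one_preceq hF.nonneg hmem' (inv_ne_zero hh) hwh')
  have hplaces : ∀ v : InfinitePlace K, v h = 1 :=
    Fin.forall_of_surjective_cons hw (by simpa [absVec] using congrFun habs 0)
      fun i => by simpa [absVec] using congrFun habs i.succ
  refine ⟨⟨h, hh, hideal, hplaces⟩, funext fun i => ?_⟩
  have := (hwh i).symm.trans (hplaces (w i))
  rw [Real.exp_eq_one_iff] at this
  linarith

end FRepresentation

end NumberField

/-- Let `K` be a number field with infinite places `w₀, w₁, …, wₙ` and `𝔞` a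
nonzero fractional ideal of `𝒪_K`. (Surjectivity) For every `s ∈ ℝⁿ` there are `μ ∈ 𝔞 ∖ {0}`
and `t ∈ ℝⁿ` with `((1/μ)𝔞, t)` an f-representation and `log wᵢ(μ) + tᵢ = sᵢ` for all `i`.
(Injectivity) If `((1/μ)𝔞, t)` and `((1/μ')𝔞, t')` are f-representations and there is a unit
`ε` with `log wᵢ(μ) + tᵢ = log wᵢ(μ') + t'ᵢ + log wᵢ(ε)` for all `i`, then
`(1/μ)𝔞 ∼ (1/μ')𝔞` and `t = t'`. Thus the classes of f-representations over the ideal class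
of `𝔞` are in bijection with `ℝⁿ/Λ`, `Λ` the unit lattice. -/
theorem stmt14 {K : Type*} [Field K] [NumberField K] {n : ℕ}
    (w₀ : InfinitePlace K) (w : Fin n → InfinitePlace K)
    (hw : Function.Bijective (Fin.cons w₀ w : Fin (n + 1) → InfinitePlace K))
    (𝔞 : FractionalIdeal (𝓞 K)⁰ K) (h𝔞 : 𝔞 ≠ 0) :
    (∀ s : Fin n → ℝ, ∃ (μ : K) (t : Fin n → ℝ), μ ∈ 𝔞 ∧ μ ≠ 0 ∧
      IsFRep w₀ w (FractionalIdeal.spanSingleton (𝓞 K)⁰ μ⁻¹ * 𝔞) t ∧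
      ∀ i : Fin n, Real.log (w i μ) + t i = s i) ∧
    (∀ (μ μ' : K) (t t' : Fin n → ℝ), μ ≠ 0 → μ' ≠ 0 →
      IsFRep w₀ w (FractionalIdeal.spanSingleton (𝓞 K)⁰ μ⁻¹ * 𝔞) t →
      IsFRep w₀ w (FractionalIdeal.spanSingleton (𝓞 K)⁰ μ'⁻¹ * 𝔞) t' →
      (∃ ε : (𝓞 K)ˣ, ∀ i : Fin n,
        Real.log (w i μ) + t i =
          Real.log (w i μ') + t' i + Real.log (w i (algebraMap (𝓞 K) K ε))) →
      EquivIdeal (FractionalIdeal.spanSingleton (𝓞 K)⁰ μ⁻¹ * 𝔞)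
        (FractionalIdeal.spanSingleton (𝓞 K)⁰ μ'⁻¹ * 𝔞) ∧ t = t') :=
  ⟨exists_isFRep hw h𝔞, fun _ _ _ _ _ _ hF hF' ⟨ε, hε⟩ => isFRep_unique hw.2 hF hF' ε hε⟩
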